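/- Assume in addition that the scalars q₂†·p₁, q̃₂†·A⁻¹·p₁, q₂†·A⁻¹·p̃₁ and q̃₂†·A⁻²·p̃₁ are all nonzero. Then the rank-one parts G₂ and G̃₂ are completely determined by the vectors p₁, p̃₁, q₂†, q̃₂† via the explicit formulas G₂ = A · ((z₂ − z₁)·(q₂†·p₁)⁻¹ • (p₁·q₂†) + (z₁ − ζ₂)·(q₂†·A⁻¹·p̃₁)⁻¹ • ((A⁻¹·p̃₁)·q₂†)) and G̃₂ = A · ((z₂ − ζ₁)·(q̃₂†·A⁻¹·p₁)⁻¹ • ((A⁻¹·p₁)·q̃₂†) + (ζ₁ − ζ₂)·(q̃₂†·A⁻²·p̃₁)⁻¹ • ((A⁻²·p̃₁)·q̃₂†)). -/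

import Mathlib

/-!
Clearing denominators in `B₂(z) B₁(z) = B̃₁(z) B̃₂(z)` leaves an identity affine in `z`, whose value
at `z = z₁` is `(z₁ - z₂) A G₁ + G₂ G₁ = (z₁ - z₂) G̃₁ A + G̃₁ G̃₂`. The left side is a column times
`q₁†` and the right side is `p̃₁` times a row, so `(z₁ - z₂) A p₁ + (q₂† p₁) p₂` is a multiple of
`p̃₁`; pairing with `q₂† A⁻¹` and using `q₂† A⁻¹ p₂ = tr (G₂ A⁻¹) = z₂ - ζ₂` fixes the multiple.

The trace condition `tr (G A⁻¹) = z₀ - ζ₀` gives `B(z)⁻¹ = A⁻¹ - (z - ζ₀)⁻¹ A⁻¹ G A⁻¹`. Inverting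
the identity therefore yields a refactorization of the same kind around `A⁻¹`, with poles `ζᵢ` and
the roles of `Gᵢ` and `G̃ᵢ` exchanged, and the same argument applied to it gives `p̃₂`.
-/

open Filter Matrix

section Algebra

variable {K R : Type*} [Field K] [Ring R] [Algebra K R]

def elementaryDivisor (A G : R) (w z : K) : R := A + (z - w)⁻¹ • G

theorem smul_add_eq_zero_of_ne {V : Type*} [AddCommGroup V] [Module K V] {X Y : V} {a b : K}
    (hab : a ≠ b) (ha : a • X + Y = 0) (hb : b • X + Y = 0) (c : K) : c • X + Y = 0 := by
  have hX : X = 0 := by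
    have : (a - b) • X = 0 := by linear_combination (norm := module) ha - hb
    exact (smul_eq_zero.mp this).resolve_left (sub_ne_zero.mpr hab)
  simpa [hX] using ha

theorem elementaryDivisor_refactorization_residue [Infinite K] {A G₁ G₂ H₁ H₂ : R} {w₁ w₂ : K}
    (h : ∀ᶠ z in cofinite, elementaryDivisor A G₂ w₂ z * elementaryDivisor A G₁ w₁ z =
      elementaryDivisor A H₁ w₁ z * elementaryDivisor A H₂ w₂ z) :
    (w₁ - w₂) • (A * G₁) + G₂ * G₁ = (w₁ - w₂) • (H₁ * A) + H₁ * H₂ := by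
  generalize hX : A * G₁ - H₁ * A = X
  generalize hY : G₂ * A - A * H₂ = Y
  generalize hZ : G₂ * G₁ - H₁ * H₂ = Z
  have expand : ∀ z, elementaryDivisor A G₂ w₂ z * elementaryDivisor A G₁ w₁ z -
      elementaryDivisor A H₁ w₁ z * elementaryDivisor A H₂ w₂ z =
      (z - w₁)⁻¹ • X + (z - w₂)⁻¹ • Y + ((z - w₂)⁻¹ * (z - w₁)⁻¹) • Z := by
    intro z
    simp only [elementaryDivisor, ← hX, ← hY, ← hZ, add_mul, mul_add, smul_mul_assoc,
      mul_smul_comm, smul_sub]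
    module
  -- multiplied by `(z - w₁) * (z - w₂)`, the identity becomes affine in `z`
  have cleared : ∀ᶠ z : K in cofinite, z • (X + Y) + (Z - w₂ • X - w₁ • Y) = 0 := by
    filter_upwards [h, eventually_cofinite_ne w₁, eventually_cofinite_ne w₂] with z hz hz₁ hz₂
    have i₁ : (z - w₁) * (z - w₁)⁻¹ = 1 := mul_inv_cancel₀ (sub_ne_zero.mpr hz₁)
    have i₂ : (z - w₂) * (z - w₂)⁻¹ = 1 := mul_inv_cancel₀ (sub_ne_zero.mpr hz₂)
    have hz' := expand z
    rw [hz, sub_self] at hz'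
    linear_combination (norm := module) ((z - w₁) * (z - w₂)) • hz'.symm
      - i₁ • ((z - w₂) • X + Z) - i₂ • ((z - w₁) • Y + ((z - w₁) * (z - w₁)⁻¹) • Z)
  obtain ⟨a, ha⟩ := cleared.exists
  obtain ⟨b, hb, hba⟩ := (cleared.and (eventually_cofinite_ne a)).exists
  have := smul_add_eq_zero_of_ne hba hb ha w₁
  rw [← hX, ← hY, ← hZ] at this
  linear_combination (norm := module) this

theorem elementaryDivisor_inv {A B G : R} (hAB : A * B = 1) (hBA : B * A = 1) {w ω z : K}
    (hG : G * B * G = (w - ω) • G) (hzw : z ≠ w) (hzω : z ≠ ω) :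
    elementaryDivisor A G w z * elementaryDivisor B (-(B * G * B)) ω z = 1 ∧
      elementaryDivisor B (-(B * G * B)) ω z * elementaryDivisor A G w z = 1 := by
  have hscal : (z - w)⁻¹ - (z - ω)⁻¹ - (z - w)⁻¹ * (z - ω)⁻¹ * (w - ω) = 0 := by
    field_simp [sub_ne_zero.mpr hzw, sub_ne_zero.mpr hzω]
    ring
  have e₁ : A * (B * G * B) = G * B := by rw [← mul_assoc, ← mul_assoc, hAB, one_mul]
  have e₂ : G * (B * G * B) = (w - ω) • (G * B) := by
    rw [← mul_assoc, ← mul_assoc, hG, smul_mul_assoc]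
  have e₃ : B * G * B * A = B * G := by rw [mul_assoc, hBA, mul_one]
  have e₄ : B * G * B * G = (w - ω) • (B * G) := by
    rw [mul_assoc, mul_assoc, ← mul_assoc G, hG, mul_smul_comm]
  constructor
  · simp only [elementaryDivisor, mul_add, add_mul, smul_mul_assoc, mul_smul_comm, mul_neg,
      hAB, e₁, e₂]
    linear_combination (norm := module) hscal • (G * B)
  · simp only [elementaryDivisor, mul_add, add_mul, smul_mul_assoc, mul_smul_comm, neg_mul,
      hBA, e₃, e₄]
    linear_combination (norm := module) hscal • (B * G)

theorem elementaryDivisor_refactorization_inv {A B G₁ G₂ H₁ H₂ : R} (hAB : A * B = 1)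
    (hBA : B * A = 1) {w₁ w₂ ω₁ ω₂ : K}
    (hG₁ : G₁ * B * G₁ = (w₁ - ω₁) • G₁) (hG₂ : G₂ * B * G₂ = (w₂ - ω₂) • G₂)
    (hH₁ : H₁ * B * H₁ = (w₁ - ω₁) • H₁) (hH₂ : H₂ * B * H₂ = (w₂ - ω₂) • H₂)
    (h : ∀ᶠ z in cofinite, elementaryDivisor A G₂ w₂ z * elementaryDivisor A G₁ w₁ z =
      elementaryDivisor A H₁ w₁ z * elementaryDivisor A H₂ w₂ z) :
    ∀ᶠ z in cofinite,
      elementaryDivisor B (-(B * H₂ * B)) ω₂ z * elementaryDivisor B (-(B * H₁ * B)) ω₁ z =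
        elementaryDivisor B (-(B * G₁ * B)) ω₁ z * elementaryDivisor B (-(B * G₂ * B)) ω₂ z := by
  filter_upwards [h, eventually_cofinite_ne w₁, eventually_cofinite_ne w₂,
    eventually_cofinite_ne ω₁, eventually_cofinite_ne ω₂] with z hz hw₁ hw₂ hω₁ hω₂
  obtain ⟨g₁, g₁'⟩ := elementaryDivisor_inv hAB hBA hG₁ hw₁ hω₁
  obtain ⟨g₂, g₂'⟩ := elementaryDivisor_inv hAB hBA hG₂ hw₂ hω₂
  obtain ⟨h₁, h₁'⟩ := elementaryDivisor_inv hAB hBA hH₁ hw₁ hω₁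
  obtain ⟨h₂, h₂'⟩ := elementaryDivisor_inv hAB hBA hH₂ hw₂ hω₂
  have key := congrArg (·⁻¹) (Units.ext (u := ⟨_, _, g₂, g₂'⟩ * ⟨_, _, g₁, g₁'⟩)
    (v := ⟨_, _, h₁, h₁'⟩ * ⟨_, _, h₂, h₂'⟩) hz)
  simp only [_root_.mul_inv_rev] at key
  exact congrArg Units.val key.symm

end Algebra

section RankOne

variable {l m n K : Type*}

theorem col_mul_row_mul_col_mul_row [CommRing K] [Fintype m] (p : Matrix l (Fin 1) K)
    (q : Matrix (Fin 1) m K) (p' : Matrix m (Fin 1) K) (q' : Matrix (Fin 1) n K) :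
    p * q * (p' * q') = (q * p') 0 0 • (p * q') := by
  ext i j
  simp [Matrix.mul_apply, Finset.mul_sum, mul_comm, mul_left_comm]

theorem trace_col_mul_row_mul [CommRing K] [Fintype m] (p : Matrix m (Fin 1) K)
    (q : Matrix (Fin 1) m K) (M : Matrix m m K) : (p * q * M).trace = (q * M * p) 0 0 := by
  rw [Matrix.mul_assoc, Matrix.trace_mul_comm, Matrix.trace_fin_one, Matrix.mul_assoc]

theorem exists_eq_smul_of_col_mul_eq_mul_row [Field K] {p w : Matrix m (Fin 1) K}
    {u q : Matrix (Fin 1) n K} (hq : q ≠ 0) (h : p * u = w * q) : ∃ σ : K, w = σ • p := by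
  obtain ⟨j, hj⟩ : ∃ j, q 0 j ≠ 0 := by
    by_contra! hc
    exact hq (Matrix.ext fun i j => by simpa [Subsingleton.elim i 0] using hc j)
  refine ⟨u 0 j / q 0 j, Matrix.ext fun i k => ?_⟩
  have hij := congrFun (congrFun h i) j
  simp only [Matrix.mul_apply, Fin.sum_univ_one, Subsingleton.elim k 0] at hij ⊢
  simp only [Matrix.smul_apply, smul_eq_mul]
  field_simp
  linear_combination -hij

theorem eq_smul_add_smul_of_smul_add_smul_eq_smul [Field K] [Fintype m]
    (q : Matrix (Fin 1) m K) {x v y : Matrix m (Fin 1) K} {a τ : K}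
    (h : a • x + (q * x) 0 0 • v = τ • y) (hx : (q * x) 0 0 ≠ 0) (hy : (q * y) 0 0 ≠ 0) :
    v = (-a * ((q * x) 0 0)⁻¹) • x + ((a + (q * v) 0 0) * ((q * y) 0 0)⁻¹) • y := by
  have hq := congrArg (fun M => (q * M) 0 0) h
  simp only [Matrix.mul_add, Matrix.mul_smul, Matrix.add_apply, Matrix.smul_apply,
    smul_eq_mul] at hq
  have hτ : τ = (q * x) 0 0 * (a + (q * v) 0 0) * ((q * y) 0 0)⁻¹ := by
    field_simp
    linear_combination -hq
  subst hτ
  linear_combination (norm := module) ((q * x) 0 0)⁻¹ • h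
    - inv_mul_cancel₀ hx • (v - ((a + (q * v) 0 0) * ((q * y) 0 0)⁻¹) • y)

end RankOne

section Refactorization

variable {n K : Type*} [Fintype n] [DecidableEq n] [Field K] [Infinite K]

theorem elementaryDivisor_refactorization_left_col_eq {A : Matrix n n K} (hA : IsUnit A.det)
    {z₁ z₂ ζ₂ : K} {p₁ p₂ pt₁ pt₂ : Matrix n (Fin 1) K} {q₁ q₂ qt₁ qt₂ : Matrix (Fin 1) n K}
    (hq₁ : q₁ ≠ 0) (hζ₂ : (q₂ * A⁻¹ * p₂) 0 0 = z₂ - ζ₂)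
    (h : ∀ᶠ z in cofinite,
      elementaryDivisor A (p₂ * q₂) z₂ z * elementaryDivisor A (p₁ * q₁) z₁ z =
        elementaryDivisor A (pt₁ * qt₁) z₁ z * elementaryDivisor A (pt₂ * qt₂) z₂ z)
    (hs₁ : (q₂ * p₁) 0 0 ≠ 0) (hs₃ : (q₂ * A⁻¹ * pt₁) 0 0 ≠ 0) :
    p₂ = ((z₂ - z₁) * ((q₂ * p₁) 0 0)⁻¹) • (A * p₁)
      + ((z₁ - ζ₂) * ((q₂ * A⁻¹ * pt₁) 0 0)⁻¹) • pt₁ := by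
  have res := elementaryDivisor_refactorization_residue h
  rw [col_mul_row_mul_col_mul_row, col_mul_row_mul_col_mul_row] at res
  have factored : pt₁ * ((z₁ - z₂) • (qt₁ * A) + (qt₁ * pt₂) 0 0 • qt₂) =
      ((z₁ - z₂) • (A * p₁) + (q₂ * p₁) 0 0 • p₂) * q₁ := by
    simpa only [Matrix.mul_add, Matrix.add_mul, Matrix.mul_smul, Matrix.smul_mul,
      Matrix.mul_assoc] using res.symm
  obtain ⟨τ, hτ⟩ := exists_eq_smul_of_col_mul_eq_mul_row hq₁ factored
  have hcancel : q₂ * A⁻¹ * (A * p₁) = q₂ * p₁ := by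
    rw [Matrix.mul_assoc, ← Matrix.mul_assoc A⁻¹, nonsing_inv_mul A hA, Matrix.one_mul]
  rw [← hcancel] at hτ hs₁
  rw [eq_smul_add_smul_of_smul_add_smul_eq_smul (q₂ * A⁻¹) hτ hs₁ hs₃, hζ₂, hcancel]
  module

theorem elementaryDivisor_refactorization_right_col_eq {A : Matrix n n K} (hA : IsUnit A.det)
    {z₁ z₂ ζ₁ ζ₂ : K} {p₁ p₂ pt₁ pt₂ : Matrix n (Fin 1) K} {q₁ q₂ qt₁ qt₂ : Matrix (Fin 1) n K}
    (hqt₁ : qt₁ ≠ 0)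
    (hζ₁ : (q₁ * A⁻¹ * p₁) 0 0 = z₁ - ζ₁) (hζt₁ : (qt₁ * A⁻¹ * pt₁) 0 0 = z₁ - ζ₁)
    (hζ₂ : (q₂ * A⁻¹ * p₂) 0 0 = z₂ - ζ₂) (hζt₂ : (qt₂ * A⁻¹ * pt₂) 0 0 = z₂ - ζ₂)
    (h : ∀ᶠ z in cofinite,
      elementaryDivisor A (p₂ * q₂) z₂ z * elementaryDivisor A (p₁ * q₁) z₁ z =
        elementaryDivisor A (pt₁ * qt₁) z₁ z * elementaryDivisor A (pt₂ * qt₂) z₂ z)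
    (hs₂ : (qt₂ * A⁻¹ * p₁) 0 0 ≠ 0) (hs₄ : (qt₂ * A⁻¹ * A⁻¹ * pt₁) 0 0 ≠ 0) :
    pt₂ = ((z₂ - ζ₁) * ((qt₂ * A⁻¹ * p₁) 0 0)⁻¹) • p₁
      + ((ζ₁ - ζ₂) * ((qt₂ * A⁻¹ * A⁻¹ * pt₁) 0 0)⁻¹) • (A⁻¹ * pt₁) := by
  have hconj : ∀ (p : Matrix n (Fin 1) K) (q : Matrix (Fin 1) n K),
      -(A⁻¹ * (p * q) * A⁻¹) = (A⁻¹ * p) * -(q * A⁻¹) := by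
    intro p q
    simp only [Matrix.mul_neg, Matrix.mul_assoc]
  have hsq : ∀ (p : Matrix n (Fin 1) K) (q : Matrix (Fin 1) n K) {c : K},
      (q * A⁻¹ * p) 0 0 = c → p * q * A⁻¹ * (p * q) = c • (p * q) := by
    intro p q c hc
    rw [Matrix.mul_assoc p, col_mul_row_mul_col_mul_row, hc]
  have inv := elementaryDivisor_refactorization_inv (mul_nonsing_inv A hA) (nonsing_inv_mul A hA)
    (hsq _ _ hζ₁) (hsq _ _ hζ₂) (hsq _ _ hζt₁) (hsq _ _ hζt₂) h
  simp only [hconj] at inv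
  have hinv : A⁻¹⁻¹ = A := nonsing_inv_nonsing_inv A hA
  have hrow : -(qt₁ * A⁻¹) ≠ 0 := by
    refine neg_ne_zero.mpr fun h₀ => hqt₁ ?_
    simpa [Matrix.mul_assoc, nonsing_inv_mul A hA] using congrArg (· * A) h₀
  have htrace : (-(qt₂ * A⁻¹) * A⁻¹⁻¹ * (A⁻¹ * pt₂)) 0 0 = ζ₂ - z₂ := by
    simp only [hinv, Matrix.neg_mul, Matrix.neg_apply, Matrix.mul_assoc,
      mul_nonsing_inv_cancel_left A _ hA]
    rw [← Matrix.mul_assoc, hζt₂, neg_sub]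
  -- `inv` is `h` with `A⁻¹`, `ζᵢ`, `A⁻¹ * ptᵢ`, `-(qtᵢ * A⁻¹)`, `A⁻¹ * pᵢ`, `-(qᵢ * A⁻¹)` in place
  -- of `A`, `zᵢ`, `pᵢ`, `qᵢ`, `ptᵢ`, `qtᵢ`; its trace condition `htrace` has `z₂` in place of `ζ₂`
  have hcol := elementaryDivisor_refactorization_left_col_eq (isUnit_nonsing_inv_det A hA)
    hrow htrace inv (by simpa [Matrix.mul_assoc] using hs₄)
    (by simpa [hinv, Matrix.mul_assoc, mul_nonsing_inv_cancel_left A _ hA] using hs₂)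
  rw [← mul_nonsing_inv_cancel_left A pt₂ hA, hcol]
  simp only [hinv, Matrix.neg_mul, Matrix.neg_apply, Matrix.mul_assoc, Matrix.mul_add,
    Matrix.mul_smul, mul_nonsing_inv_cancel_left A _ hA]
  module

end Refactorization

theorem refactorization_G2_formulas_general
    (r : ℕ)
    (A : Matrix (Fin r) (Fin r) ℂ) (hA : IsUnit A.det)
    (z₁ z₂ ζ₁ ζ₂ : ℂ)
    (p₁ p₂ pt₁ pt₂ : Matrix (Fin r) (Fin 1) ℂ)
    (q₁ q₂ qt₁ qt₂ : Matrix (Fin 1) (Fin r) ℂ)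
    (hq₁ : q₁ ≠ 0) (hqt₁ : qt₁ ≠ 0)
    (hζ₁ : (p₁ * q₁ * A⁻¹).trace = z₁ - ζ₁)
    (hζt₁ : (pt₁ * qt₁ * A⁻¹).trace = z₁ - ζ₁)
    (hζ₂ : (p₂ * q₂ * A⁻¹).trace = z₂ - ζ₂)
    (hζt₂ : (pt₂ * qt₂ * A⁻¹).trace = z₂ - ζ₂)
    (hre : ∀ z : ℂ, z ≠ z₁ → z ≠ z₂ →
      (A + (z - z₂)⁻¹ • (p₂ * q₂)) * (A + (z - z₁)⁻¹ • (p₁ * q₁)) =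
      (A + (z - z₁)⁻¹ • (pt₁ * qt₁)) * (A + (z - z₂)⁻¹ • (pt₂ * qt₂)))
    (hs₁ : (q₂ * p₁) 0 0 ≠ 0)
    (hs₂ : (qt₂ * A⁻¹ * p₁) 0 0 ≠ 0)
    (hs₃ : (q₂ * A⁻¹ * pt₁) 0 0 ≠ 0)
    (hs₄ : (qt₂ * (A ^ 2)⁻¹ * pt₁) 0 0 ≠ 0) :
    p₂ * q₂ =
      A * (((z₂ - z₁) * ((q₂ * p₁) 0 0)⁻¹) • (p₁ * q₂)
        + ((z₁ - ζ₂) * ((q₂ * A⁻¹ * pt₁) 0 0)⁻¹) • ((A⁻¹ * pt₁) * q₂)) ∧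
    pt₂ * qt₂ =
      A * (((z₂ - ζ₁) * ((qt₂ * A⁻¹ * p₁) 0 0)⁻¹) • ((A⁻¹ * p₁) * qt₂)
        + ((ζ₁ - ζ₂) * ((qt₂ * (A ^ 2)⁻¹ * pt₁) 0 0)⁻¹) • (((A ^ 2)⁻¹ * pt₁) * qt₂)) := by
  have h : ∀ᶠ z in cofinite,
      elementaryDivisor A (p₂ * q₂) z₂ z * elementaryDivisor A (p₁ * q₁) z₁ z =
        elementaryDivisor A (pt₁ * qt₁) z₁ z * elementaryDivisor A (pt₂ * qt₂) z₂ z := by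
    filter_upwards [eventually_cofinite_ne z₁, eventually_cofinite_ne z₂] with z h₁ h₂
    exact hre z h₁ h₂
  rw [trace_col_mul_row_mul] at hζ₁ hζt₁ hζ₂ hζt₂
  have hp₂ := elementaryDivisor_refactorization_left_col_eq hA hq₁ hζ₂ h hs₁ hs₃
  have hpt₂ := elementaryDivisor_refactorization_right_col_eq hA hqt₁ hζ₁ hζt₁ hζ₂ hζt₂ h hs₂
    (by rwa [← Matrix.inv_pow', sq, ← Matrix.mul_assoc] at hs₄)
  constructor
  · rw [hp₂]
    simp only [Matrix.add_mul, Matrix.smul_mul, Matrix.mul_add, Matrix.mul_smul, Matrix.mul_assoc,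
      mul_nonsing_inv_cancel_left A _ hA]
  · rw [hpt₂, ← Matrix.inv_pow', sq]
    simp only [Matrix.add_mul, Matrix.smul_mul, Matrix.mul_add,
      Matrix.mul_smul, Matrix.mul_assoc, mul_nonsing_inv_cancel_left A _ hA]

/-- The rank-one parts `G₂` and `G̃₂` are determined by `p₁, p̃₁, q₂†, q̃₂†`. -/
theorem refactorization_G2_formulas
    (r : ℕ) (hr : 1 ≤ r)
    (A : Matrix (Fin r) (Fin r) ℂ) (hA : IsUnit A.det)
    (z₁ z₂ ζ₁ ζ₂ : ℂ)
    (h12 : z₁ ≠ z₂) (h1a : z₁ ≠ ζ₁) (h1b : z₁ ≠ ζ₂)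
    (h2a : z₂ ≠ ζ₁) (h2b : z₂ ≠ ζ₂) (hab : ζ₁ ≠ ζ₂)
    (p₁ p₂ pt₁ pt₂ : Matrix (Fin r) (Fin 1) ℂ)
    (q₁ q₂ qt₁ qt₂ : Matrix (Fin 1) (Fin r) ℂ)
    (hp₁ : p₁ ≠ 0) (hp₂ : p₂ ≠ 0) (hpt₁ : pt₁ ≠ 0) (hpt₂ : pt₂ ≠ 0)
    (hq₁ : q₁ ≠ 0) (hq₂ : q₂ ≠ 0) (hqt₁ : qt₁ ≠ 0) (hqt₂ : qt₂ ≠ 0)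
    (hζ₁ : (p₁ * q₁ * A⁻¹).trace = z₁ - ζ₁)
    (hζt₁ : (pt₁ * qt₁ * A⁻¹).trace = z₁ - ζ₁)
    (hζ₂ : (p₂ * q₂ * A⁻¹).trace = z₂ - ζ₂)
    (hζt₂ : (pt₂ * qt₂ * A⁻¹).trace = z₂ - ζ₂)
    (hre : ∀ z : ℂ, z ≠ z₁ → z ≠ z₂ →
      (A + (z - z₂)⁻¹ • (p₂ * q₂)) * (A + (z - z₁)⁻¹ • (p₁ * q₁)) =
      (A + (z - z₁)⁻¹ • (pt₁ * qt₁)) * (A + (z - z₂)⁻¹ • (pt₂ * qt₂)))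
    (hs₁ : (q₂ * p₁) 0 0 ≠ 0)
    (hs₂ : (qt₂ * A⁻¹ * p₁) 0 0 ≠ 0)
    (hs₃ : (q₂ * A⁻¹ * pt₁) 0 0 ≠ 0)
    (hs₄ : (qt₂ * (A ^ 2)⁻¹ * pt₁) 0 0 ≠ 0) :
    p₂ * q₂ =
      A * (((z₂ - z₁) * ((q₂ * p₁) 0 0)⁻¹) • (p₁ * q₂)
        + ((z₁ - ζ₂) * ((q₂ * A⁻¹ * pt₁) 0 0)⁻¹) • ((A⁻¹ * pt₁) * q₂)) ∧
    pt₂ * qt₂ =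
      A * (((z₂ - ζ₁) * ((qt₂ * A⁻¹ * p₁) 0 0)⁻¹) • ((A⁻¹ * p₁) * qt₂)
        + ((ζ₁ - ζ₂) * ((qt₂ * (A ^ 2)⁻¹ * pt₁) 0 0)⁻¹) • (((A ^ 2)⁻¹ * pt₁) * qt₂)) :=
  refactorization_G2_formulas_general r A hA z₁ z₂ ζ₁ ζ₂ p₁ p₂ pt₁ pt₂ q₁ q₂ qt₁ qt₂ hq₁ hqt₁ hζ₁
    hζt₁ hζ₂ hζt₂ hre hs₁ hs₂ hs₃ hs₄
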